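/- arXiv:2604.26383 — 5 statements merged into one kernel-verified Lean document; each statement's English description precedes it below -/
import Mathlib

section
/- Under the monotonicity hypotheses, the quantized conservative update satisfies a discrete maximum principle: if φ⁺ is monotone nondecreasing, φ⁻ is monotone nonincreasing, and the map s ↦ s - φ⁺(s) + φ⁻(s) is monotone nondecreasing on ℤ, then for every state q : Fin N → ℤ and every index i, min over j of q j ≤ (T q) i ≤ max over j of q j. -/
/-- Interface transfer on the periodic grid `Fin N`. -/
def transfer {N : ℕ} [NeZero N] (φp φm : ℤ → ℤ) (q : Fin N → ℤ) (i : Fin N) : ℤ :=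
  φp (q i) + φm (q (i + 1))

/-- Quantized conservative update on the periodic grid `Fin N`. -/
def update {N : ℕ} [NeZero N] (φp φm : ℤ → ℤ) (q : Fin N → ℤ) (i : Fin N) : ℤ :=
  q i - (transfer φp φm q i - transfer φp φm q (i - 1))

/-- Under the monotonicity hypotheses, the update satisfies a discrete maximum principle:
the updated value lies between the minimum and the maximum of the previous state. -/
theorem update_maximum_principle {N : ℕ} [NeZero N] (φp φm : ℤ → ℤ)
    (hp : Monotone φp) (hm : Antitone φm)
    (hmix : Monotone fun s : ℤ => s - φp s + φm s)
    (q : Fin N → ℤ) (i : Fin N) :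
    Finset.univ.inf' Finset.univ_nonempty q ≤ update φp φm q i ∧
      update φp φm q i ≤ Finset.univ.sup' Finset.univ_nonempty q := by
  set m := Finset.univ.inf' Finset.univ_nonempty q with hmdef
  set M := Finset.univ.sup' Finset.univ_nonempty q with hMdef
  have hle : ∀ j, m ≤ q j ∧ q j ≤ M := fun j =>
    ⟨Finset.inf'_le _ (Finset.mem_univ j), Finset.le_sup' _ (Finset.mem_univ j)⟩
  have key : update φp φm q i =
      (q i - φp (q i) + φm (q i)) + φp (q (i - 1)) - φm (q (i + 1)) := by
    simp [update, transfer]; ring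
  constructor
  · rw [key]
    have h1 : m - φp m + φm m ≤ q i - φp (q i) + φm (q i) := hmix (hle i).1
    have h2 : φp m ≤ φp (q (i - 1)) := hp (hle _).1
    have h3 : φm (q (i + 1)) ≤ φm m := hm (hle _).1
    omega
  · rw [key]
    have h1 : q i - φp (q i) + φm (q i) ≤ M - φp M + φm M := hmix (hle i).2
    have h2 : φp (q (i - 1)) ≤ φp M := hp (hle _).2
    have h3 : φm M ≤ φm (q (i + 1)) := hm (hle _).2
    omega
end

section
/- Under the monotonicity hypotheses, iterates of the quantized conservative update satisfy the maximum principle at all times: if φ⁺ is monotone nondecreasing, φ⁻ is monotone nonincreasing, and the map s ↦ s - φ⁺(s) + φ⁻(s) is monotone nondecreasing on ℤ, then for every state q : Fin N → ℤ, every n : ℕ, and every index i, min over j of q j ≤ (T^[n] q) i ≤ max over j of q j. -/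
lemma update_step {N : ℕ} [NeZero N] (φp φm : ℤ → ℤ)
    (hp : Monotone φp) (hm : Antitone φm)
    (hmix : Monotone fun s : ℤ => s - φp s + φm s)
    (q : Fin N → ℤ) (m M : ℤ) (h : ∀ j, m ≤ q j ∧ q j ≤ M) (i : Fin N) :
    m ≤ update φp φm q i ∧ update φp φm q i ≤ M := by
  have h1 := hmix (h i).2
  have h1' := hmix (h i).1
  simp only at h1 h1'
  have h2 := hp (h (i - 1)).2
  have h2' := hp (h (i - 1)).1
  have h3 := hm (h (i + 1)).1
  have h3' := hm (h (i + 1)).2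
  unfold update transfer
  rw [sub_add_cancel]
  constructor <;> linarith

/-- Under the monotonicity hypotheses, iterates of the update satisfy the maximum
principle at all times. -/
theorem iterate_update_maximum_principle {N : ℕ} [NeZero N] (φp φm : ℤ → ℤ)
    (hp : Monotone φp) (hm : Antitone φm)
    (hmix : Monotone fun s : ℤ => s - φp s + φm s)
    (q : Fin N → ℤ) (n : ℕ) (i : Fin N) :
    Finset.univ.inf' Finset.univ_nonempty q ≤ (update φp φm)^[n] q i ∧
      (update φp φm)^[n] q i ≤ Finset.univ.sup' Finset.univ_nonempty q := by
  induction n generalizing i with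
  | zero =>
    exact ⟨Finset.inf'_le _ (Finset.mem_univ i), Finset.le_sup' _ (Finset.mem_univ i)⟩
  | succ n ih =>
    rw [Function.iterate_succ_apply']
    exact update_step φp φm hp hm hmix _ _ _ ih i
end

section
/- Crandall–Tartar lemma (finite-dimensional integer version): let T : (Fin N → ℤ) → (Fin N → ℤ) be a map that is order-preserving (p i ≤ q i for all i implies (T p) i ≤ (T q) i for all i) and mass-preserving (∑ i, (T q) i = ∑ i, q i for every q). Then T is nonexpansive in the ℓ¹ norm: for all p, q : Fin N → ℤ, ∑ i, |(T p) i - (T q) i| ≤ ∑ i, |p i - q i|. -/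
/-- Crandall–Tartar lemma (finite-dimensional integer version): an order-preserving and
mass-preserving map on integer states is nonexpansive in the ℓ¹ norm. -/
theorem crandall_tartar {N : ℕ} [NeZero N] (T : (Fin N → ℤ) → (Fin N → ℤ))
    (hmono : ∀ p q : Fin N → ℤ, (∀ i, p i ≤ q i) → ∀ i, T p i ≤ T q i)
    (hmass : ∀ q : Fin N → ℤ, ∑ i, T q i = ∑ i, q i)
    (p q : Fin N → ℤ) :
    ∑ i, |T p i - T q i| ≤ ∑ i, |p i - q i| := by
  set r : Fin N → ℤ := fun i => max (p i) (q i) with hr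
  have h1 : ∀ i, T p i ≤ T r i := hmono p r (fun i => le_max_left _ _)
  have h2 : ∀ i, T q i ≤ T r i := hmono q r (fun i => le_max_right _ _)
  calc ∑ i, |T p i - T q i|
      ≤ ∑ i, (2 * T r i - T p i - T q i) := by
        apply Finset.sum_le_sum
        intro i _
        have := h1 i; have := h2 i
        rcases abs_cases (T p i - T q i) with ⟨h', _⟩ | ⟨h', _⟩ <;> omega
    _ = 2 * (∑ i, T r i) - (∑ i, T p i) - (∑ i, T q i) := by
        simp [Finset.sum_sub_distrib, Finset.mul_sum]
    _ = 2 * (∑ i, r i) - (∑ i, p i) - (∑ i, q i) := by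
        rw [hmass, hmass, hmass]
    _ = ∑ i, (2 * r i - p i - q i) := by
        simp [Finset.sum_sub_distrib, Finset.mul_sum]
    _ = ∑ i, |p i - q i| := by
        apply Finset.sum_congr rfl
        intro i _
        simp only [hr]
        rcases abs_cases (p i - q i) with ⟨h', h''⟩ | ⟨h', h''⟩ <;>
          [rw [max_eq_left (by omega)]; rw [max_eq_right (by omega)]] <;> omega
end

section
/- Under the monotonicity hypotheses, the quantized conservative update is total-variation diminishing on the periodic grid: if φ⁺ is monotone nondecreasing, φ⁻ is monotone nonincreasing, and the map s ↦ s - φ⁺(s) + φ⁻(s) is monotone nondecreasing on ℤ, then for every state q : Fin N → ℤ, ∑ i, |(T q) (i+1) - (T q) i| ≤ ∑ i, |q (i+1) - q i|, with indices taken cyclically. -/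
/-!
With `g s = s - φ⁺ s + φ⁻ s` the update reads `(T q) i = g (q i) + φ⁺ (q (i-1)) - φ⁻ (q (i+1))`.
Total variation is subadditive and invariant under cyclic shifts, so `TV (T q)` is at most
`TV (g ∘ q) + TV (φ⁺ ∘ q) + TV (-φ⁻ ∘ q)`. The three maps `g`, `φ⁺`, `-φ⁻` are monotone and sum
to the identity, so their increments along any step of `q` share a sign and their absolute values
add up to `|q (i+1) - q i|`: the bound is exactly `TV q`.
-/

section TotalVariation

variable {N : ℕ} [NeZero N] {α β : Type*} [AddCommGroup α] [LinearOrder α]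

def totalVariation (q : Fin N → α) : α :=
  ∑ i, |q (i + 1) - q i|

theorem totalVariation_comp_add_right (q : Fin N → α) (c : Fin N) :
    totalVariation (fun i => q (i + c)) = totalVariation q := by
  refine Fintype.sum_equiv (Equiv.addRight c) _ _ fun i => ?_
  simp only [Equiv.coe_addRight, add_right_comm i 1 c]

theorem totalVariation_comp_sub_right (q : Fin N → α) (c : Fin N) :
    totalVariation (fun i => q (i - c)) = totalVariation q := by
  simpa only [sub_eq_add_neg] using totalVariation_comp_add_right q (-c)

theorem totalVariation_add_le [IsOrderedAddMonoid α] (q r : Fin N → α) :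
    totalVariation (q + r) ≤ totalVariation q + totalVariation r := by
  rw [totalVariation, totalVariation, totalVariation, ← Finset.sum_add_distrib]
  refine Finset.sum_le_sum fun i _ => ?_
  simpa only [Pi.add_apply, add_sub_add_comm] using abs_add_le _ _

theorem abs_add_sub_add_of_monotone [IsOrderedAddMonoid α] [LinearOrder β] {f g : β → α}
    (hf : Monotone f) (hg : Monotone g) (x y : β) :
    |(f + g) y - (f + g) x| = |f y - f x| + |g y - g x| := by
  rw [Pi.add_apply, Pi.add_apply, add_sub_add_comm, abs_add_eq_add_abs_iff]
  rcases le_total x y with hxy | hyx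
  · exact .inl ⟨sub_nonneg.2 (hf hxy), sub_nonneg.2 (hg hxy)⟩
  · exact .inr ⟨sub_nonpos.2 (hf hyx), sub_nonpos.2 (hg hyx)⟩

theorem totalVariation_comp_add_of_monotone [IsOrderedAddMonoid α] [LinearOrder β]
    {f g : β → α} (hf : Monotone f) (hg : Monotone g) (q : Fin N → β) :
    totalVariation ((f + g) ∘ q) = totalVariation (f ∘ q) + totalVariation (g ∘ q) := by
  simp only [totalVariation, Function.comp_apply, abs_add_sub_add_of_monotone hf hg,
    Finset.sum_add_distrib]

end TotalVariation

theorem update_eq {N : ℕ} [NeZero N] (φp φm : ℤ → ℤ) (q : Fin N → ℤ) :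
    update φp φm q = (fun s => s - φp s + φm s) ∘ q + (fun i => φp (q (i - 1)))
      + (fun i => -φm (q (i + 1))) := by
  funext i
  simp only [update, transfer, sub_add_cancel, Pi.add_apply, Function.comp_apply]
  ring

/-- Under the monotonicity hypotheses, the update is total-variation diminishing
on the periodic grid. -/
theorem update_tvd {N : ℕ} [NeZero N] (φp φm : ℤ → ℤ)
    (hp : Monotone φp) (hm : Antitone φm)
    (hmix : Monotone fun s : ℤ => s - φp s + φm s)
    (q : Fin N → ℤ) :
    ∑ i, |update φp φm q (i + 1) - update φp φm q i| ≤ ∑ i, |q (i + 1) - q i| := by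
  change totalVariation (update φp φm q) ≤ totalVariation q
  rw [update_eq]
  set g : ℤ → ℤ := fun s => s - φp s + φm s with hg
  have hid : g + φp + (-φm ·) = id := by
    funext s
    simp only [hg, Pi.add_apply, id]
    ring
  calc totalVariation (g ∘ q + (fun i => φp (q (i - 1))) + fun i => -φm (q (i + 1)))
      ≤ totalVariation (g ∘ q) + totalVariation (fun i => φp (q (i - 1)))
          + totalVariation (fun i => -φm (q (i + 1))) :=
        (totalVariation_add_le _ _).trans (by gcongr; exact totalVariation_add_le _ _)
    _ = totalVariation (g ∘ q) + totalVariation (φp ∘ q)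
          + totalVariation ((-φm ·) ∘ q) := by
        rw [← totalVariation_comp_sub_right (φp ∘ q) 1,
          ← totalVariation_comp_add_right ((-φm ·) ∘ q) 1]
        rfl
    _ = totalVariation ((g + φp + (-φm ·)) ∘ q) := by
        rw [totalVariation_comp_add_of_monotone (f := g + φp) (hmix.add hp) hm.neg,
          totalVariation_comp_add_of_monotone hmix hp]
    _ = totalVariation q := by rw [hid, Function.id_comp]
end

section
/- Under the monotonicity hypotheses, the quantized conservative update is an ℓ¹ contraction: if φ⁺ is monotone nondecreasing, φ⁻ is monotone nonincreasing, and the map s ↦ s - φ⁺(s) + φ⁻(s) is monotone nondecreasing on ℤ, then for all states p, q : Fin N → ℤ, ∑ i, |(T p) i - (T q) i| ≤ ∑ i, |p i - q i|. -/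
lemma update_rw {N : ℕ} [NeZero N] (φp φm : ℤ → ℤ) (q : Fin N → ℤ) (i : Fin N) :
    update φp φm q i
      = (q i - φp (q i) + φm (q i)) + φp (q (i - 1)) - φm (q (i + 1)) := by
  simp only [update, transfer, sub_add_cancel]
  ring

lemma update_mono {N : ℕ} [NeZero N] (φp φm : ℤ → ℤ)
    (hp : Monotone φp) (hm : Antitone φm)
    (hmix : Monotone fun s : ℤ => s - φp s + φm s)
    (p q : Fin N → ℤ) (h : ∀ j, p j ≤ q j) (i : Fin N) :
    update φp φm p i ≤ update φp φm q i := by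
  rw [update_rw, update_rw]
  have h1 := hmix (h i)
  have h2 := hp (h (i - 1))
  have h3 := hm (h (i + 1))
  simp only at h1
  linarith

lemma update_sum {N : ℕ} [NeZero N] (φp φm : ℤ → ℤ) (q : Fin N → ℤ) :
    ∑ i, update φp φm q i = ∑ i, q i := by
  have : ∑ i : Fin N, transfer φp φm q (i - 1) = ∑ i : Fin N, transfer φp φm q i :=
    Equiv.sum_comp (Equiv.subRight (1 : Fin N)) (transfer φp φm q)
  simp only [update, Finset.sum_sub_distrib, this]
  ring

/-- Under the monotonicity hypotheses, the update is an ℓ¹ contraction. -/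
theorem update_l1_contraction {N : ℕ} [NeZero N] (φp φm : ℤ → ℤ)
    (hp : Monotone φp) (hm : Antitone φm)
    (hmix : Monotone fun s : ℤ => s - φp s + φm s)
    (p q : Fin N → ℤ) :
    ∑ i, |update φp φm p i - update φp φm q i| ≤ ∑ i, |p i - q i| := by
  set r : Fin N → ℤ := fun i => max (p i) (q i) with hr
  have habs : ∀ a b : ℤ, |a - b| = 2 * max a b - a - b := by
    intro a b
    rcases le_total a b with h | h
    · rw [max_eq_right h, abs_of_nonpos (by omega)]; ring
    · rw [max_eq_left h, abs_of_nonneg (by omega)]; ring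
  have hP : ∀ i, update φp φm p i ≤ update φp φm r i :=
    update_mono φp φm hp hm hmix p r (fun j => le_max_left _ _)
  have hQ : ∀ i, update φp φm q i ≤ update φp φm r i :=
    update_mono φp φm hp hm hmix q r (fun j => le_max_right _ _)
  calc ∑ i, |update φp φm p i - update φp φm q i|
      ≤ ∑ i, (2 * update φp φm r i - update φp φm p i - update φp φm q i) := by
        apply Finset.sum_le_sum
        intro i _
        rw [habs]
        have := hP i
        have := hQ i
        have := max_le (hP i) (hQ i)
        omega
    _ = 2 * (∑ i, update φp φm r i) - (∑ i, update φp φm p i) - (∑ i, update φp φm q i) := by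
        simp [Finset.sum_sub_distrib, Finset.mul_sum]
    _ = 2 * (∑ i, r i) - (∑ i, p i) - (∑ i, q i) := by
        rw [update_sum, update_sum, update_sum]
    _ = ∑ i, (2 * r i - p i - q i) := by
        simp [Finset.sum_sub_distrib, Finset.mul_sum]
    _ = ∑ i, |p i - q i| := by
        apply Finset.sum_congr rfl
        intro i _
        rw [habs]
end
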